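/- arXiv:0902.0026 — 2 statements merged into one kernel-verified Lean document; each statement's English description precedes it below -/
import Mathlib

section
/- Suppose W ≥ 2 and 2 ≤ p ≤ 4·log W. Then the p-th moment of the maximum entry of the random demodulator matrix satisfies (E[ (max_{r,ω} |Φ_{r,ω}|)^p ])^{1/p} ≤ √(6·log W / R). -/
open MeasureTheory ProbabilityTheory Matrix
open scoped BigOperators ENNReal

noncomputable section

/-- The `W×W` unitary discrete Fourier transform matrix,
`F_{n,ω} = W^{-1/2}·exp(-2πi·n·ω/W)`. -/
def dftMatrix (W : ℕ) : Matrix (Fin W) (Fin W) ℂ := fun n w =>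
  (Real.sqrt W : ℂ)⁻¹ *
    Complex.exp (-2 * Real.pi * Complex.I * (n.val : ℂ) * (w.val : ℂ) / (W : ℂ))

/-- The `R×W` accumulate-and-dump sampling matrix `H`:
`H_{r,j} = 1` iff `r·(W/R) ≤ j < (r+1)·(W/R)`. -/
def sampMatrix (W R : ℕ) : Matrix (Fin R) (Fin W) ℂ := fun r j =>
  if r.val * (W / R) ≤ j.val ∧ j.val < (r.val + 1) * (W / R) then 1 else 0

/-- The random demodulator matrix `Φ = H·D·F` for the sign sequence `ε`. -/
def demodMatrix (W R : ℕ) (ε : Fin W → ℝ) : Matrix (Fin R) (Fin W) ℂ :=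
  sampMatrix W R * Matrix.diagonal (fun j => (ε j : ℂ)) * dftMatrix W

/-- Spectral (`ℓ2 → ℓ2` operator) norm of a complex matrix. -/
def specNorm {m n : Type} [Fintype m] [Fintype n] [DecidableEq n]
    (A : Matrix m n ℂ) : ℝ :=
  ‖LinearMap.toContinuousLinearMap (Matrix.toEuclideanLin A)‖

/-- Frobenius norm of a complex matrix. -/
def frobNorm {m n : Type} [Fintype m] [Fintype n] (A : Matrix m n ℂ) : ℝ :=
  Real.sqrt (∑ i, ∑ j, ‖A i j‖ ^ 2)

/-- ℓ1 norm of a complex vector. -/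
def l1norm {n : Type} [Fintype n] (v : n → ℂ) : ℝ := ∑ i, ‖v i‖

/-- ℓ2 norm of a complex vector. -/
def l2norm {n : Type} [Fintype n] (v : n → ℂ) : ℝ :=
  Real.sqrt (∑ i, ‖v i‖ ^ 2)

/-- `ε` is a family of `W` independent Rademacher random variables on `(Ωp, μ)`:
each coordinate is measurable, takes only the values `±1`, takes each value with
probability `1/2`, and the coordinates are jointly independent. -/
def IsRademacherFamily {Ωp : Type} [MeasurableSpace Ωp] (μ : Measure Ωp) {W : ℕ}
    (ε : Ωp → Fin W → ℝ) : Prop :=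
  (∀ j, Measurable (fun x => ε x j)) ∧
  (∀ x j, ε x j = 1 ∨ ε x j = -1) ∧
  (∀ j, μ {x | ε x j = 1} = 1 / 2) ∧
  iIndepFun (fun j x => ε x j) μ

/-!
Put `k = ⌈2 log W⌉`, so that `p ≤ 2k`; by Lyapunov's inequality it suffices to bound the `2k`-th
moment. Each entry `Φ_{rω} = ∑_j H_{rj} F_{jω} ε_j` is a Rademacher sum whose coefficients have
squared `ℓ²` norm `(W/R)·(1/W) = 1/R`, so Khintchine's inequality with the Gaussian constant
`(2k-1)‼` gives `E|Φ_{rω}|^{2k} ≤ (2k-1)‼ R^{-k}`. Bounding the maximum by the sum over the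
`RW ≤ W²` entries gives `E max^{2k} ≤ W² (2k-1)‼ R^{-k}`, and for this `k` one has
`W² (2k-1)‼ ≤ (6 log W)^k`.
-/

open scoped Nat

namespace Nat

lemma doubleFactorial_two_mul_sub_one_mul (m : ℕ) : (2 * m - 1)‼ * (2 ^ m * m !) = (2 * m)! := by
  cases m with
  | zero => rfl
  | succ n =>
    rw [← doubleFactorial_two_mul, show 2 * (n + 1) = 2 * n + 1 + 1 by ring,
      factorial_eq_mul_doubleFactorial, Nat.add_sub_cancel, mul_comm]

lemma two_pow_mul_factorial_le (m : ℕ) : 2 ^ m * m ! ≤ (2 * m)! := by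
  rw [← doubleFactorial_two_mul_sub_one_mul]
  exact Nat.le_mul_of_pos_left _ (doubleFactorial_pos _)

lemma choose_mul_doubleFactorial_le {j k : ℕ} (hjk : j ≤ k) :
    (2 * k).choose (2 * j) * (2 * (k - j) - 1)‼ ≤ (2 * k - 1)‼ * k.choose j := by
  have hM : 0 < (2 * j)! * (2 ^ (k - j) * (k - j)!) := by positivity
  refine Nat.le_of_mul_le_mul_right ?_ hM
  calc (2 * k).choose (2 * j) * (2 * (k - j) - 1)‼ * ((2 * j)! * (2 ^ (k - j) * (k - j)!))
      = (2 * k).choose (2 * j) * (2 * j)! * (2 * k - 2 * j)! := by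
        rw [← Nat.mul_sub, ← doubleFactorial_two_mul_sub_one_mul (k - j)]; ring
    _ = (2 * k - 1)‼ * (2 ^ k * k !) := by
        rw [choose_mul_factorial_mul_factorial (by omega), doubleFactorial_two_mul_sub_one_mul]
    _ = (2 * k - 1)‼ * k.choose j * (2 ^ j * j ! * (2 ^ (k - j) * (k - j)!)) := by
        rw [← choose_mul_factorial_mul_factorial hjk]
        rw [show 2 ^ k = 2 ^ j * 2 ^ (k - j) by rw [← pow_add, Nat.add_sub_cancel' hjk]]
        ring
    _ ≤ (2 * k - 1)‼ * k.choose j * ((2 * j)! * (2 ^ (k - j) * (k - j)!)) := by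
        gcongr; exact two_pow_mul_factorial_le j

end Nat

namespace Real

lemma exp_one_mul_sub_one_pow_le {n : ℕ} (hn : 0 < n) :
    exp 1 * ((n : ℝ) - 1) ^ n ≤ (n : ℝ) ^ n := by
  have hn' : (0 : ℝ) < n := by exact_mod_cast hn
  have h1 : ((n : ℝ) - 1) / n ≤ exp (-1 / n) := by
    calc ((n : ℝ) - 1) / n = -1 / n + 1 := by field_simp; ring
      _ ≤ exp (-1 / n) := add_one_le_exp _
  have h2 : (((n : ℝ) - 1) / n) ^ n ≤ exp (-1) := by
    have h0 : (0 : ℝ) ≤ ((n : ℝ) - 1) / n :=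
      div_nonneg (sub_nonneg.mpr (Nat.one_le_cast.mpr hn)) hn'.le
    calc (((n : ℝ) - 1) / n) ^ n ≤ exp (-1 / n) ^ n := by gcongr
      _ = exp (-1) := by rw [← exp_nat_mul]; field_simp
  rw [div_pow, div_le_iff₀ (by positivity)] at h2
  calc exp 1 * ((n : ℝ) - 1) ^ n ≤ exp 1 * (exp (-1) * (n : ℝ) ^ n) := by gcongr
    _ = (n : ℝ) ^ n := by rw [← mul_assoc, ← exp_add]; simp

lemma exp_mul_doubleFactorial_le {k : ℕ} (hk : 2 ≤ k) :
    exp ((k : ℝ) - 1) * ((2 * k - 1)‼ : ℝ) ≤ (3 * ((k : ℝ) - 1)) ^ k := by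
  induction k, hk using Nat.le_induction with
  | base =>
    norm_num [Nat.doubleFactorial]
    linarith [exp_one_lt_d9]
  | succ k hk ih =>
    have hdf : ((2 * (k + 1) - 1)‼ : ℝ) = (2 * k + 1) * (2 * k - 1)‼ := by
      rw [show 2 * (k + 1) - 1 = 2 * k - 1 + 2 by omega, Nat.doubleFactorial_add_two,
        show 2 * k - 1 + 2 = 2 * k + 1 by omega]
      push_cast; ring
    have he := exp_one_mul_sub_one_pow_le (show 0 < k by omega)
    have hk' : (2 : ℝ) ≤ k := by exact_mod_cast hk
    push_cast
    rw [hdf, add_sub_cancel_right]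
    calc exp k * ((2 * k + 1) * (2 * k - 1)‼)
        = exp 1 * (2 * k + 1) * (exp ((k : ℝ) - 1) * (2 * k - 1)‼) := by
          rw [show exp (k : ℝ) = exp 1 * exp ((k : ℝ) - 1) by rw [← exp_add, add_sub_cancel]]
          ring
      _ ≤ exp 1 * (2 * k + 1) * (3 * ((k : ℝ) - 1)) ^ k := by gcongr
      _ = (2 * k + 1) * 3 ^ k * (exp 1 * ((k : ℝ) - 1) ^ k) := by rw [mul_pow]; ring
      _ ≤ 3 * k * 3 ^ k * (k : ℝ) ^ k := by
          have : (0 : ℝ) ≤ k - 1 := by linarith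
          gcongr
          linarith
      _ = (3 * (k : ℝ)) ^ (k + 1) := by ring

lemma exp_sub_le_div_pow {a x : ℝ} {n : ℕ} (ha : 0 < a) (hax : a ≤ x) (hxn : x ≤ n) :
    exp (x - a) ≤ (x / a) ^ n := by
  have hx : 0 < x := ha.trans_le hax
  have hlog : 1 - a / x ≤ log (x / a) := by
    simpa using one_sub_inv_le_log_of_pos (div_pos hx ha)
  have hax' : 0 ≤ 1 - a / x := by rw [sub_nonneg, div_le_one hx]; exact hax
  calc exp (x - a) ≤ exp (n * log (x / a)) := by
        gcongr
        calc x - a = x * (1 - a / x) := by field_simp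
          _ ≤ n * (1 - a / x) := by gcongr
          _ ≤ n * log (x / a) := by gcongr
    _ = (x / a) ^ n := by rw [exp_nat_mul, exp_log (div_pos hx ha)]

/-- With `k = ⌈2L⌉` we have `(k-1)/2 < L ≤ k/2`, and on that range `L ↦ (6L)^k e^{-2L}` is
increasing (`exp_sub_le_div_pow`), so it suffices to compare at `L = (k-1)/2`. -/
lemma exp_two_mul_mul_doubleFactorial_le {L : ℝ} (hL : 1 / 2 < L) :
    exp (2 * L) * ((2 * ⌈2 * L⌉₊ - 1)‼ : ℝ) ≤ (6 * L) ^ ⌈2 * L⌉₊ := by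
  set k := ⌈2 * L⌉₊
  have hk : 2 ≤ k := Nat.lt_ceil.mpr (by norm_num; linarith)
  have hkL : 2 * L ≤ k := Nat.le_ceil _
  have hLk : (k : ℝ) - 1 < 2 * L := by
    linarith [Nat.ceil_lt_add_one (show 0 ≤ 2 * L by linarith)]
  have hk1 : (0 : ℝ) < k - 1 := by
    have : (2 : ℝ) ≤ k := by exact_mod_cast hk
    linarith
  calc exp (2 * L) * ((2 * k - 1)‼ : ℝ)
      = exp (2 * L - (k - 1)) * (exp ((k : ℝ) - 1) * (2 * k - 1)‼) := by
        rw [← mul_assoc, ← exp_add, sub_add_cancel]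
    _ ≤ (2 * L / (k - 1)) ^ k * (3 * ((k : ℝ) - 1)) ^ k := by
        gcongr
        · exact exp_sub_le_div_pow hk1 hLk.le hkL
        · exact exp_mul_doubleFactorial_le hk
    _ = (6 * L) ^ k := by rw [← mul_pow]; congr 1; field_simp; ring

end Real

section Moments

variable {Ω : Type*} [MeasurableSpace Ω] {μ : Measure Ω}

lemma eLpNorm_ofReal_eq_integral_rpow {f : Ω → ℝ} (hf0 : 0 ≤ f) {p : ℝ} (hp : 0 < p)
    (hf : MemLp f (ENNReal.ofReal p) μ) :
    eLpNorm f (ENNReal.ofReal p) μ = ENNReal.ofReal ((∫ x, f x ^ p ∂μ) ^ (1 / p)) := by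
  rw [hf.eLpNorm_eq_integral_rpow_norm (by simpa using hp) ENNReal.ofReal_ne_top,
    ENNReal.toReal_ofReal hp.le, one_div]
  simp_rw [Real.norm_of_nonneg (hf0 _)]

lemma integral_rpow_rpow_one_div_le [IsProbabilityMeasure μ] {f : Ω → ℝ} (hf0 : 0 ≤ f)
    {s t : ℝ} (hs : 0 < s) (hst : s ≤ t) (hf : MemLp f (ENNReal.ofReal t) μ) :
    (∫ x, f x ^ s ∂μ) ^ (1 / s) ≤ (∫ x, f x ^ t ∂μ) ^ (1 / t) := by
  have hst' : ENNReal.ofReal s ≤ ENNReal.ofReal t := ENNReal.ofReal_le_ofReal hst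
  have h := eLpNorm_le_eLpNorm_of_exponent_le hst' hf.aestronglyMeasurable (μ := μ)
  rwa [eLpNorm_ofReal_eq_integral_rpow hf0 hs (hf.mono_exponent hst'),
    eLpNorm_ofReal_eq_integral_rpow hf0 (hs.trans_le hst) hf,
    ENNReal.ofReal_le_ofReal_iff
      (Real.rpow_nonneg (integral_nonneg fun x => Real.rpow_nonneg (hf0 x) t) _)] at h

lemma eLpNorm_natCast_eq_integral_pow {f : Ω → ℝ} (hf0 : 0 ≤ f) {k : ℕ} (hk : k ≠ 0)
    (hf : MemLp f k μ) :
    eLpNorm f k μ = ENNReal.ofReal ((∫ x, f x ^ k ∂μ) ^ (1 / (k : ℝ))) := by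
  rw [← ENNReal.ofReal_natCast] at hf ⊢
  rw [eLpNorm_ofReal_eq_integral_rpow hf0 (by positivity) hf]
  simp_rw [Real.rpow_natCast]

/-- A moment bound `∫ f^k ≤ d a^k` says `‖f‖_k ≤ d^{1/k} a`, so Minkowski's inequality in `L^k`
adds two such bounds. -/
lemma integral_add_pow_le {f g : Ω → ℝ} (hf0 : 0 ≤ f) (hg0 : 0 ≤ g) {k : ℕ}
    (hf : MemLp f k μ) (hg : MemLp g k μ) {a b d : ℝ} (ha : 0 ≤ a) (hb : 0 ≤ b) (hd : 0 ≤ d)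
    (hfa : ∫ x, f x ^ k ∂μ ≤ d * a ^ k) (hgb : ∫ x, g x ^ k ∂μ ≤ d * b ^ k) :
    ∫ x, (f x + g x) ^ k ∂μ ≤ d * (a + b) ^ k := by
  rcases Nat.eq_zero_or_pos k with rfl | hk
  · simpa using hfa
  have hmoment : ∀ {h : Ω → ℝ} {c : ℝ}, 0 ≤ h → 0 ≤ c → ∫ x, h x ^ k ∂μ ≤ d * c ^ k →
      (∫ x, h x ^ k ∂μ) ^ (1 / (k : ℝ)) ≤ d ^ (1 / (k : ℝ)) * c := by
    intro h c h0 hc hhc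
    calc (∫ x, h x ^ k ∂μ) ^ (1 / (k : ℝ)) ≤ (d * c ^ k) ^ (1 / (k : ℝ)) := by
          gcongr
          exact integral_nonneg fun x => pow_nonneg (h0 x) k
      _ = d ^ (1 / (k : ℝ)) * c := by
          rw [Real.mul_rpow hd (by positivity), one_div, Real.pow_rpow_inv_natCast hc hk.ne']
  have hnorm0 : ∀ {h : Ω → ℝ}, 0 ≤ h → 0 ≤ (∫ x, h x ^ k ∂μ) ^ (1 / (k : ℝ)) := fun h0 =>
    Real.rpow_nonneg (integral_nonneg fun x => pow_nonneg (h0 x) k) _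
  have hmink := eLpNorm_add_le hf.aestronglyMeasurable hg.aestronglyMeasurable
    (by exact_mod_cast hk : (1 : ℝ≥0∞) ≤ k)
  rw [eLpNorm_natCast_eq_integral_pow (add_nonneg hf0 hg0) hk.ne' (hf.add hg),
    eLpNorm_natCast_eq_integral_pow hf0 hk.ne' hf, eLpNorm_natCast_eq_integral_pow hg0 hk.ne' hg,
    ← ENNReal.ofReal_add (hnorm0 hf0) (hnorm0 hg0),
    ENNReal.ofReal_le_ofReal_iff (add_nonneg (hnorm0 hf0) (hnorm0 hg0))] at hmink
  have hfg0 : 0 ≤ ∫ x, (f x + g x) ^ k ∂μ :=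
    integral_nonneg fun x => pow_nonneg (add_nonneg (hf0 x) (hg0 x)) k
  calc ∫ x, (f x + g x) ^ k ∂μ = ((∫ x, (f x + g x) ^ k ∂μ) ^ (1 / (k : ℝ))) ^ k := by
        rw [one_div, Real.rpow_inv_natCast_pow hfg0 hk.ne']
    _ ≤ (d ^ (1 / (k : ℝ)) * a + d ^ (1 / (k : ℝ)) * b) ^ k := by
        gcongr
        exact hmink.trans (add_le_add (hmoment hf0 ha hfa) (hmoment hg0 hb hgb))
    _ = d * (a + b) ^ k := by
        rw [← mul_add, mul_pow, one_div, Real.rpow_inv_natCast_pow hd hk.ne']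

end Moments

lemma Finset.sum_range_two_mul_add_one_ite_even {M : Type*} [AddCommMonoid M] (f : ℕ → M)
    (k : ℕ) :
    ∑ m ∈ Finset.range (2 * k + 1), (if Even m then f (m / 2) else 0)
      = ∑ j ∈ Finset.range (k + 1), f j := by
  induction k with
  | zero => simp
  | succ k ih =>
    rw [show 2 * (k + 1) + 1 = 2 * k + 1 + 1 + 1 by ring, Finset.sum_range_succ,
      Finset.sum_range_succ, ih, Finset.sum_range_succ _ (k + 1)]
    have hodd : ¬ Even (2 * k + 1) := Nat.not_even_iff_odd.mpr (odd_two_mul_add_one k)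
    have heven : Even (2 * k + 1 + 1) := ⟨k + 1, by ring⟩
    rw [if_neg hodd, if_pos heven, show (2 * k + 1 + 1) / 2 = k + 1 by omega, add_zero]

namespace IsRademacherFamily

variable {Ω : Type} [MeasurableSpace Ω] {μ : Measure Ω} {W : ℕ} {ε : Ω → Fin W → ℝ}

lemma measurable (hε : IsRademacherFamily μ ε) : Measurable ε :=
  measurable_pi_lambda _ hε.1

/-- `ε` takes values in the finite set `{±1}^W`, so every measurable function of it is bounded. -/
lemma memLp_comp [IsFiniteMeasure μ] (hε : IsRademacherFamily μ ε)
    {Φ : (Fin W → ℝ) → ℝ} (hΦ : Measurable Φ) (p : ℝ≥0∞) :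
    MemLp (fun x => Φ (ε x)) p μ := by
  have hS : (Set.univ.pi fun _ : Fin W => ({1, -1} : Set ℝ)).Finite :=
    Set.Finite.pi fun _ => Set.toFinite _
  obtain ⟨C, hC⟩ := (hS.image fun v => ‖Φ v‖).bddAbove
  refine MemLp.of_bound (hΦ.comp hε.measurable).aestronglyMeasurable C
    (ae_of_all _ fun x => hC ⟨ε x, ?_, rfl⟩)
  simpa [Set.mem_pi] using hε.2.1 x

lemma integrable_comp [IsFiniteMeasure μ] (hε : IsRademacherFamily μ ε)
    {Φ : (Fin W → ℝ) → ℝ} (hΦ : Measurable Φ) : Integrable (fun x => Φ (ε x)) μ :=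
  memLp_one_iff_integrable.mp (hε.memLp_comp hΦ 1)

variable [IsProbabilityMeasure μ]

lemma integral_coord (hε : IsRademacherFamily μ ε) (j : Fin W) :
    ∫ x, ε x j ∂μ = 0 := by
  set A := {x | ε x j = 1}
  have hA : MeasurableSet A := hε.1 j (measurableSet_singleton 1)
  have hind : (fun x => ε x j) = fun x => 2 * A.indicator 1 x - 1 := by
    funext x
    rcases hε.2.1 x j with h | h <;> norm_num [A, Set.indicator, h]
  rw [hind, integral_sub ((integrable_const _).indicator hA |>.const_mul 2) (integrable_const 1),
    integral_const_mul, integral_indicator_one hA, measureReal_def, hε.2.2.1 j]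
  simp

lemma integral_coord_pow (hε : IsRademacherFamily μ ε) (j : Fin W)
    (m : ℕ) : ∫ x, ε x j ^ m ∂μ = if Even m then 1 else 0 := by
  rcases Nat.even_or_odd m with hm | hm
  · have h1 : ∀ x, ε x j ^ m = 1 := fun x => by
      rcases hε.2.1 x j with h | h <;> simp [h, hm.neg_one_pow]
    simp [h1, hm]
  · have h1 : ∀ x, ε x j ^ m = ε x j := fun x => by
      rcases hε.2.1 x j with h | h <;> simp [h, hm.neg_one_pow]
    simp [h1, Nat.not_even_iff_odd.mpr hm, hε.integral_coord j]

lemma integral_mul_pow_mul_sum_pow (hε : IsRademacherFamily μ ε) (b : Fin W → ℝ)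
    {s : Finset (Fin W)} {i : Fin W} (hi : i ∉ s) (m n : ℕ) :
    ∫ x, (b i * ε x i) ^ m * (∑ j ∈ s, b j * ε x j) ^ n ∂μ
      = (if Even m then b i ^ m else 0) * ∫ x, (∑ j ∈ s, b j * ε x j) ^ n ∂μ := by
  have hindep : IndepFun (fun x => b i * ε x i) (fun x => ∑ j ∈ s, b j * ε x j) μ := by
    have := (hε.2.2.2.comp (fun j (t : ℝ) => b j * t) fun j => measurable_const_mul (b j))
      |>.indepFun_finsetSum_of_notMem (fun j => (hε.1 j).const_mul (b j)) hi
    convert this.symm using 1 <;> ext x <;> simp [Finset.sum_apply]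
  rw [hindep.integral_fun_comp_mul_comp (f := fun t => t ^ m) (g := fun t => t ^ n)
    ((hε.1 i).const_mul _).aemeasurable
    (Finset.measurable_sum _ fun j _ => (hε.1 j).const_mul _).aemeasurable
    (continuous_pow m).aestronglyMeasurable (continuous_pow n).aestronglyMeasurable]
  simp_rw [mul_pow, integral_const_mul, hε.integral_coord_pow i m]
  split_ifs <;> simp

theorem integral_sum_mul_pow_le (hε : IsRademacherFamily μ ε) (b : Fin W → ℝ)
    (s : Finset (Fin W)) (k : ℕ) :
    ∫ x, (∑ j ∈ s, b j * ε x j) ^ (2 * k) ∂μ ≤ (2 * k - 1)‼ * (∑ j ∈ s, b j ^ 2) ^ k := by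
  classical
  induction s using Finset.induction_on generalizing k with
  | empty => rcases k with _ | k <;> simp
  | insert i s hi ih =>
    set Q := ∑ j ∈ s, b j ^ 2
    have hQ : 0 ≤ Q := Finset.sum_nonneg fun j _ => sq_nonneg (b j)
    set g : ℕ → ℝ := fun j => (2 * k - 1)‼ * (k.choose j * (b i ^ 2) ^ j * Q ^ (k - j))
    have hterm : ∀ m ∈ Finset.range (2 * k + 1),
        ∫ x, (b i * ε x i) ^ m * (∑ j ∈ s, b j * ε x j) ^ (2 * k - m) * ((2 * k).choose m : ℝ) ∂μ
          ≤ if Even m then g (m / 2) else 0 := by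
      intro m hm
      rw [integral_mul_const, hε.integral_mul_pow_mul_sum_pow b hi]
      split_ifs with heven
      · obtain ⟨j, rfl⟩ := heven
        have hjk : j ≤ k := by have := Finset.mem_range.mp hm; omega
        rw [show j + j = 2 * j by ring, Nat.mul_div_cancel_left j two_pos, ← Nat.mul_sub, pow_mul]
        calc (b i ^ 2) ^ j * (∫ x, (∑ j ∈ s, b j * ε x j) ^ (2 * (k - j)) ∂μ)
              * ((2 * k).choose (2 * j) : ℝ)
            ≤ (b i ^ 2) ^ j * ((2 * (k - j) - 1)‼ * Q ^ (k - j)) * (2 * k).choose (2 * j) := by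
              gcongr
              exact ih (k - j)
          _ = (b i ^ 2) ^ j * Q ^ (k - j) * ((2 * k).choose (2 * j) * (2 * (k - j) - 1)‼ : ℕ) := by
              push_cast; ring
          _ ≤ (b i ^ 2) ^ j * Q ^ (k - j) * ((2 * k - 1)‼ * k.choose j : ℕ) := by
              gcongr ?_ * ?_
              exact_mod_cast Nat.choose_mul_doubleFactorial_le hjk
          _ = g j := by push_cast [g]; ring
      · simp
    calc ∫ x, (∑ j ∈ insert i s, b j * ε x j) ^ (2 * k) ∂μ
        = ∑ m ∈ Finset.range (2 * k + 1), ∫ x, (b i * ε x i) ^ m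
            * (∑ j ∈ s, b j * ε x j) ^ (2 * k - m) * ((2 * k).choose m : ℝ) ∂μ := by
          simp_rw [Finset.sum_insert hi, add_pow]
          exact integral_finsetSum _ fun m _ => hε.integrable_comp (Φ := fun v => (b i * v i) ^ m
            * (∑ j ∈ s, b j * v j) ^ (2 * k - m) * ((2 * k).choose m : ℝ)) (by fun_prop)
      _ ≤ ∑ m ∈ Finset.range (2 * k + 1), if Even m then g (m / 2) else 0 :=
          Finset.sum_le_sum hterm
      _ = (2 * k - 1)‼ * (b i ^ 2 + Q) ^ k := by
          rw [Finset.sum_range_two_mul_add_one_ite_even, ← Finset.mul_sum, add_pow]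
          exact congrArg _ (Finset.sum_congr rfl fun j _ => by ring)
      _ = (2 * k - 1)‼ * (∑ j ∈ insert i s, b j ^ 2) ^ k := by rw [Finset.sum_insert hi]

/-- Complex Khintchine: `|∑ c_j ε_j|² = X² + Y²` for the real and imaginary parts `X`, `Y`, and
the real bounds for `X` and `Y` combine by Minkowski's inequality in `L^k`. -/
theorem integral_norm_sum_mul_pow_le (hε : IsRademacherFamily μ ε) (c : Fin W → ℂ) (k : ℕ) :
    ∫ x, ‖∑ j, c j * (ε x j : ℂ)‖ ^ (2 * k) ∂μ ≤ (2 * k - 1)‼ * (∑ j, ‖c j‖ ^ 2) ^ k := by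
  set X := fun x => ∑ j, (c j).re * ε x j
  set Y := fun x => ∑ j, (c j).im * ε x j
  have hnorm : ∀ x, ‖∑ j, c j * (ε x j : ℂ)‖ ^ (2 * k) = (X x ^ 2 + Y x ^ 2) ^ k := by
    intro x
    rw [pow_mul, Complex.sq_norm, Complex.normSq_apply, Complex.re_sum, Complex.im_sum]
    simp only [Complex.mul_re, Complex.mul_im, Complex.ofReal_re, Complex.ofReal_im, mul_zero,
      sub_zero, zero_add, X, Y, sq]
  have hsum : ∑ j, ‖c j‖ ^ 2 = ∑ j, (c j).re ^ 2 + ∑ j, (c j).im ^ 2 := by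
    rw [← Finset.sum_add_distrib]
    exact Finset.sum_congr rfl fun j _ => by rw [Complex.sq_norm, Complex.normSq_apply]; ring
  simp_rw [hnorm, hsum]
  refine integral_add_pow_le (fun x => sq_nonneg (X x)) (fun x => sq_nonneg (Y x))
    (hε.memLp_comp (Φ := fun v => (∑ j, (c j).re * v j) ^ 2) (by fun_prop) _)
    (hε.memLp_comp (Φ := fun v => (∑ j, (c j).im * v j) ^ 2) (by fun_prop) _)
    (Finset.sum_nonneg fun j _ => sq_nonneg _) (Finset.sum_nonneg fun j _ => sq_nonneg _)
    (Nat.cast_nonneg _) ?_ ?_ <;>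
  simp_rw [← pow_mul] <;>
  exact hε.integral_sum_mul_pow_le _ _ k

end IsRademacherFamily

lemma pow_ciSup_le_sum {ι : Type*} [Fintype ι] [Nonempty ι] {f : ι → ℝ} (hf : 0 ≤ f) (n : ℕ) :
    (⨆ i, f i) ^ n ≤ ∑ i, f i ^ n := by
  obtain ⟨i, hi⟩ := exists_eq_ciSup_of_finite (f := f)
  rw [← hi]
  exact Finset.single_le_sum (fun j _ => pow_nonneg (hf j) n) (Finset.mem_univ i)

section Demodulator

variable {W R : ℕ}

lemma demodMatrix_apply (v : Fin W → ℝ) (r : Fin R) (w : Fin W) :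
    demodMatrix W R v r w = ∑ j, sampMatrix W R r j * dftMatrix W j w * (v j : ℂ) := by
  rw [demodMatrix, Matrix.mul_assoc, Matrix.mul_apply]
  exact Finset.sum_congr rfl fun j _ => by rw [Matrix.diagonal_mul]; ring

lemma norm_dftMatrix (n w : Fin W) : ‖dftMatrix W n w‖ = (√W)⁻¹ := by
  have hexp : -2 * Real.pi * Complex.I * (n.val : ℂ) * (w.val : ℂ) / (W : ℂ)
      = ((-2 * Real.pi * n.val * w.val / W : ℝ) : ℂ) * Complex.I := by
    push_cast
    ring
  rw [dftMatrix, norm_mul, hexp, Complex.norm_exp_ofReal_mul_I, mul_one, norm_inv,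
    Complex.norm_real, Real.norm_of_nonneg (Real.sqrt_nonneg _)]

lemma sum_norm_sampMatrix_sq (hdvd : R ∣ W) (r : Fin R) :
    ∑ j : Fin W, ‖sampMatrix W R r j‖ ^ 2 = (W / R : ℕ) := by
  have hblock : (r.val + 1) * (W / R) ≤ W := by
    calc (r.val + 1) * (W / R) ≤ R * (W / R) := Nat.mul_le_mul_right _ r.isLt
      _ = W := Nat.mul_div_cancel' hdvd
  have hentry : ∀ j : Fin W, ‖sampMatrix W R r j‖ ^ 2
      = if r.val * (W / R) ≤ j.val ∧ j.val < (r.val + 1) * (W / R) then (1 : ℝ) else 0 := by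
    intro j
    unfold sampMatrix
    split_ifs <;> simp
  rw [Finset.sum_congr rfl fun j _ => hentry j,
    Fin.sum_univ_eq_sum_range (fun t => if r.val * (W / R) ≤ t ∧ t < (r.val + 1) * (W / R)
      then (1 : ℝ) else 0), Finset.sum_boole]
  have hfilter : {t ∈ Finset.range W | r.val * (W / R) ≤ t ∧ t < (r.val + 1) * (W / R)}
      = Finset.Ico (r.val * (W / R)) ((r.val + 1) * (W / R)) := by
    ext t
    simp only [Finset.mem_filter, Finset.mem_range, Finset.mem_Ico]
    omega
  rw [hfilter, Nat.card_Ico, Nat.succ_mul, Nat.add_sub_cancel_left]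

lemma sum_norm_sampMatrix_mul_dftMatrix_sq (hdvd : R ∣ W) (hW : 0 < W) (r : Fin R) (w : Fin W) :
    ∑ j, ‖sampMatrix W R r j * dftMatrix W j w‖ ^ 2 = 1 / R := by
  have hR : (R : ℝ) ≠ 0 := by exact_mod_cast (Nat.pos_of_dvd_of_pos hdvd hW).ne'
  simp_rw [norm_mul, mul_pow, norm_dftMatrix, inv_pow, Real.sq_sqrt (Nat.cast_nonneg W),
    ← Finset.sum_mul, sum_norm_sampMatrix_sq hdvd, Nat.cast_div hdvd hR]
  field_simp

variable {Ω : Type} [MeasurableSpace Ω] {μ : Measure Ω} [IsProbabilityMeasure μ]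
  {ε : Ω → Fin W → ℝ}

lemma integral_norm_demodMatrix_pow_le (hε : IsRademacherFamily μ ε) (hdvd : R ∣ W) (hW : 0 < W)
    (r : Fin R) (w : Fin W) (k : ℕ) :
    ∫ x, ‖demodMatrix W R (ε x) r w‖ ^ (2 * k) ∂μ ≤ (2 * k - 1)‼ / (R : ℝ) ^ k := by
  simp_rw [demodMatrix_apply]
  refine (hε.integral_norm_sum_mul_pow_le _ k).trans_eq ?_
  rw [sum_norm_sampMatrix_mul_dftMatrix_sq hdvd hW, one_div, inv_pow, div_eq_mul_inv]

lemma integral_max_norm_demodMatrix_pow_le (hε : IsRademacherFamily μ ε) (hdvd : R ∣ W)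
    (hW : 0 < W) (k : ℕ) :
    ∫ x, (⨆ r : Fin R, ⨆ w : Fin W, ‖demodMatrix W R (ε x) r w‖) ^ (2 * k) ∂μ
      ≤ R * W * ((2 * k - 1)‼ / (R : ℝ) ^ k) := by
  have : Nonempty (Fin R) := ⟨⟨0, Nat.pos_of_dvd_of_pos hdvd hW⟩⟩
  have : Nonempty (Fin W) := ⟨⟨0, hW⟩⟩
  have hint : ∀ r w, Integrable (fun x => ‖demodMatrix W R (ε x) r w‖ ^ (2 * k)) μ :=
    fun r w => hε.integrable_comp (Φ := fun v => ‖demodMatrix W R v r w‖ ^ (2 * k))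
      (by simp_rw [demodMatrix_apply]; fun_prop)
  have hmax : ∀ x, (⨆ r : Fin R, ⨆ w : Fin W, ‖demodMatrix W R (ε x) r w‖) ^ (2 * k)
      ≤ ∑ r, ∑ w, ‖demodMatrix W R (ε x) r w‖ ^ (2 * k) := fun x =>
    (pow_ciSup_le_sum (fun r => Real.iSup_nonneg fun w => norm_nonneg _) _).trans
      (Finset.sum_le_sum fun r _ => pow_ciSup_le_sum (fun w => norm_nonneg _) _)
  calc ∫ x, (⨆ r : Fin R, ⨆ w : Fin W, ‖demodMatrix W R (ε x) r w‖) ^ (2 * k) ∂μ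
      ≤ ∫ x, ∑ r, ∑ w, ‖demodMatrix W R (ε x) r w‖ ^ (2 * k) ∂μ :=
        integral_mono_of_nonneg (ae_of_all _ fun x => pow_nonneg
            (Real.iSup_nonneg fun r => Real.iSup_nonneg fun w => norm_nonneg _) _)
          (integrable_finsetSum _ fun r _ => integrable_finsetSum _ fun w _ => hint r w)
          (ae_of_all _ hmax)
    _ = ∑ r, ∑ w, ∫ x, ‖demodMatrix W R (ε x) r w‖ ^ (2 * k) ∂μ := by
        rw [integral_finsetSum _ fun r _ => integrable_finsetSum _ fun w _ => hint r w]
        exact Finset.sum_congr rfl fun r _ => integral_finsetSum _ fun w _ => hint r w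
    _ ≤ ∑ _r : Fin R, ∑ _w : Fin W, ((2 * k - 1)‼ / (R : ℝ) ^ k) := by
        gcongr with r _ w _
        exact integral_norm_demodMatrix_pow_le hε hdvd hW r w k
    _ = R * W * ((2 * k - 1)‼ / (R : ℝ) ^ k) := by simp [mul_assoc]

lemma integral_max_norm_demodMatrix_pow_ceil_le (hε : IsRademacherFamily μ ε) (hdvd : R ∣ W)
    (hW : 2 ≤ W) :
    ∫ x, (⨆ r : Fin R, ⨆ w : Fin W, ‖demodMatrix W R (ε x) r w‖) ^ (2 * ⌈2 * Real.log W⌉₊) ∂μ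
      ≤ (6 * Real.log W / R) ^ ⌈2 * Real.log W⌉₊ := by
  set L := Real.log W
  set k := ⌈2 * L⌉₊
  have hL : 1 / 2 < L := by
    have : Real.log 2 ≤ L := Real.log_le_log two_pos (by exact_mod_cast hW)
    linarith [Real.log_two_gt_d9]
  have hRW : (R : ℝ) ≤ W := by exact_mod_cast Nat.le_of_dvd (by omega) hdvd
  have hexp : Real.exp (2 * L) = (W : ℝ) ^ 2 := by
    rw [← Real.exp_log (x := (W : ℝ) ^ 2) (by positivity), Real.log_pow]
    push_cast
    rfl
  calc _ ≤ R * W * ((2 * k - 1)‼ / (R : ℝ) ^ k) :=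
        integral_max_norm_demodMatrix_pow_le hε hdvd (by omega) k
    _ ≤ Real.exp (2 * L) * (2 * k - 1)‼ / (R : ℝ) ^ k := by
        rw [hexp, mul_div_assoc, sq]
        gcongr
    _ ≤ (6 * L) ^ k / (R : ℝ) ^ k := by
        gcongr
        exact Real.exp_two_mul_mul_doubleFactorial_le hL
    _ = (6 * L / R) ^ k := (div_pow _ _ _).symm

end Demodulator

theorem max_entry_moment_bound_general (W R : ℕ) (hdvd : R ∣ W) (hW : 2 ≤ W)
    {Ωp : Type} [MeasurableSpace Ωp] (μ : Measure Ωp) [IsProbabilityMeasure μ]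
    (ε : Ωp → Fin W → ℝ) (hrad : IsRademacherFamily μ ε)
    (p : ℝ) (hp2 : 2 ≤ p) (hp4 : p ≤ 4 * Real.log W) :
    (∫ x, (⨆ r : Fin R, ⨆ w : Fin W, ‖demodMatrix W R (ε x) r w‖) ^ p ∂μ)
        ^ (1 / p)
      ≤ Real.sqrt (6 * Real.log W / R) := by
  set k := ⌈2 * Real.log W⌉₊
  have hpk : p ≤ (2 * k : ℕ) := by push_cast; linarith [Nat.le_ceil (2 * Real.log W)]
  set M : (Fin W → ℝ) → ℝ := fun v => ⨆ r : Fin R, ⨆ w : Fin W, ‖demodMatrix W R v r w‖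
  have hM0 : ∀ v, 0 ≤ M v := fun v =>
    Real.iSup_nonneg fun r => Real.iSup_nonneg fun w => norm_nonneg _
  have hM : Measurable M := Measurable.iSup fun r => Measurable.iSup fun w => by
    simp_rw [demodMatrix_apply]; fun_prop
  calc (∫ x, M (ε x) ^ p ∂μ) ^ (1 / p)
      ≤ (∫ x, M (ε x) ^ ((2 * k : ℕ) : ℝ) ∂μ) ^ (1 / ((2 * k : ℕ) : ℝ)) :=
        integral_rpow_rpow_one_div_le (fun x => hM0 _) (by linarith) hpk (hrad.memLp_comp hM _)
    _ ≤ ((6 * Real.log W / R) ^ k) ^ (1 / ((2 * k : ℕ) : ℝ)) := by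
        simp_rw [Real.rpow_natCast]
        gcongr
        · exact integral_nonneg fun x => pow_nonneg (hM0 _) _
        · exact integral_max_norm_demodMatrix_pow_ceil_le hrad hdvd hW
    _ = Real.sqrt (6 * Real.log W / R) := by
        rw [Real.sqrt_eq_rpow, ← Real.rpow_natCast, ← Real.rpow_mul (by positivity)]
        have hk : (k : ℝ) ≠ 0 := by push_cast at hpk; linarith
        congr 1
        push_cast
        field_simp

/-- For `2 ≤ p ≤ 4·log W`, the `p`-th moment of the maximum entry of the random
demodulator matrix satisfies `(E[(max_{r,ω} |Φ_{r,ω}|)^p])^{1/p} ≤ √(6·log W / R)`. -/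
theorem max_entry_moment_bound (W R : ℕ) (hR : 0 < R) (hdvd : R ∣ W) (hW : 2 ≤ W)
    {Ωp : Type} [MeasurableSpace Ωp] (μ : Measure Ωp) [IsProbabilityMeasure μ]
    (ε : Ωp → Fin W → ℝ) (hrad : IsRademacherFamily μ ε)
    (p : ℝ) (hp2 : 2 ≤ p) (hp4 : p ≤ 4 * Real.log W) :
    (∫ x, (⨆ r : Fin R, ⨆ w : Fin W, ‖demodMatrix W R (ε x) r w‖) ^ p ∂μ)
        ^ (1 / p)
      ≤ Real.sqrt (6 * Real.log W / R) :=
  max_entry_moment_bound_general W R hdvd hW μ ε hrad p hp2 hp4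
end
end

section
/- (Column Norms) There is a universal constant C > 0 with the following property. For every δ ∈ (0,1], if W ≥ 2 and the sampling rate satisfies R ≥ C·δ^{-2}·log W, then P( max_{ω} | ‖φ_ω‖₂² − 1 | ≥ δ ) ≤ 1/W, where the maximum is over all columns φ_ω of the random demodulator matrix. -/
open MeasureTheory ProbabilityTheory Matrix
open scoped BigOperators ENNReal

noncomputable section

/-! Write `W = R q`. The `r`-th entry of column `w` is `W^{-1/2} ∑_{i<q} ε_{rq+i} zᵢ` with
unimodular `zᵢ`, so `W (‖φ_w‖₂² - 1)` is a sum of `R` independent chaoses `‖∑ εᵢ zᵢ‖² - q`.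
Peeling off one sign at a time and using `cosh x ≤ exp (x² / 2)` gives
`E exp (λ (‖∑ εᵢ zᵢ‖² - q)) ≤ exp (4 λ² q²)` for `|λ| q ≤ 1/8`. Chernoff's bound with
`λ = δ / (8 q)` then gives `P(|‖φ_w‖₂² - 1| ≥ δ) ≤ 2 exp (-R δ² / 16) ≤ 2 W⁻³`, and a union bound
over the `W` columns finishes. Since the signs are uniform on `{±1}^W`, all expectations are
averages over sign patterns. -/

namespace RandomDemodulator

open Finset Real

def boolSign (b : Bool) : ℝ := if b then 1 else -1

@[simp] lemma boolSign_true : boolSign true = 1 := rfl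

@[simp] lemma boolSign_false : boolSign false = -1 := rfl

lemma boolSign_sq (b : Bool) : boolSign b ^ 2 = 1 := by cases b <;> simp

def signedSum {ι : Type*} [Fintype ι] (z : ι → ℂ) (σ : ι → Bool) : ℂ :=
  ∑ j, (boolSign (σ j) : ℂ) * z j

lemma signedSum_cons {n : ℕ} (z : Fin (n + 1) → ℂ) (b : Bool) (τ : Fin n → Bool) :
    signedSum z (Fin.cons b τ) = boolSign b * z 0 + signedSum (Fin.tail z) τ := by
  simp [signedSum, Fin.sum_univ_succ, Fin.tail]

lemma sum_fin_succ_pi {β M : Type*} [Fintype β] [AddCommMonoid M] {n : ℕ}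
    (f : (Fin (n + 1) → β) → M) :
    ∑ σ, f σ = ∑ τ : Fin n → β, ∑ b, f (Fin.cons b τ) := by
  rw [← (Fin.consEquiv fun _ => β).sum_comp, Fintype.sum_prod_type, sum_comm]
  rfl

lemma exp_add_add_exp_sub_le (x y : ℝ) : exp (x + y) + exp (x - y) ≤ 2 * exp (x + y ^ 2 / 2) :=
  calc exp (x + y) + exp (x - y) = 2 * exp x * cosh y := by
        rw [cosh_eq, exp_add, exp_sub, exp_neg]; ring
    _ ≤ 2 * exp x * exp (y ^ 2 / 2) := by gcongr; exact cosh_le_exp_half_sq y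
    _ = 2 * exp (x + y ^ 2 / 2) := by rw [exp_add]; ring

lemma norm_sq_boolSign_mul_add {z : ℂ} (hz : ‖z‖ = 1) (S : ℂ) (b : Bool) :
    ‖(boolSign b : ℂ) * z + S‖ ^ 2 =
      1 + ‖S‖ ^ 2 + boolSign b * (2 * (z * (starRingEnd ℂ) S).re) := by
  have hbz : Complex.normSq ((boolSign b : ℂ) * z) = 1 := by
    rw [Complex.normSq_mul, Complex.normSq_ofReal, ← Complex.sq_norm, hz, ← sq, boolSign_sq]
    norm_num
  rw [Complex.sq_norm, Complex.normSq_add, hbz, ← Complex.sq_norm, mul_assoc,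
    Complex.re_ofReal_mul]
  ring

/-- Averaging over one sign: the cross term `± c` contributes `cosh (μ c)` with
`c² ≤ 4 ‖S‖²`, which is absorbed by raising the parameter from `μ` to `μ + 2 μ²`. -/
lemma sum_bool_exp_le {z : ℂ} (hz : ‖z‖ = 1) (S : ℂ) (μ m : ℝ) :
    ∑ b : Bool, exp (μ * (‖(boolSign b : ℂ) * z + S‖ ^ 2 - (m + 1))) ≤
      2 * exp ((μ + 2 * μ ^ 2) * (‖S‖ ^ 2 - m) + 2 * μ ^ 2 * m) := by
  set c := 2 * (z * (starRingEnd ℂ) S).re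
  have hc : c ^ 2 ≤ 4 * ‖S‖ ^ 2 := by
    have h := Complex.abs_re_le_norm (z * (starRingEnd ℂ) S)
    rw [norm_mul, hz, Complex.norm_conj, one_mul] at h
    nlinarith [sq_abs (z * (starRingEnd ℂ) S).re, abs_nonneg (z * (starRingEnd ℂ) S).re]
  have hnorm (b : Bool) : ‖(boolSign b : ℂ) * z + S‖ ^ 2 = 1 + ‖S‖ ^ 2 + boolSign b * c :=
    norm_sq_boolSign_mul_add hz S b
  simp only [Fintype.sum_bool, hnorm, boolSign_true, boolSign_false]
  calc _ = exp (μ * (‖S‖ ^ 2 - m) + μ * c) + exp (μ * (‖S‖ ^ 2 - m) - μ * c) := by ring_nf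
    _ ≤ 2 * exp (μ * (‖S‖ ^ 2 - m) + (μ * c) ^ 2 / 2) := exp_add_add_exp_sub_le _ _
    _ ≤ _ := by
      refine mul_le_mul_of_nonneg_left (exp_le_exp.2 ?_) two_pos.le
      nlinarith [mul_le_mul_of_nonneg_left hc (sq_nonneg μ)]

/-- The update `μ ↦ μ + 2 μ²` of `sum_bool_exp_le` keeps the parameter admissible for one sign
fewer, and the exponents it produces add up to at most `4 μ² (n + 1)²`. -/
lemma chaos_param_step {μ : ℝ} {n : ℕ} (h : |μ| * ((n : ℝ) + 1) ≤ 1 / 8) :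
    |μ + 2 * μ ^ 2| * (n : ℝ) ≤ 1 / 8 ∧
      2 * μ ^ 2 * (n : ℝ) + 4 * (μ + 2 * μ ^ 2) ^ 2 * (n : ℝ) ^ 2 ≤
        4 * μ ^ 2 * ((n : ℝ) + 1) ^ 2 := by
  set a := |μ| with ha_def
  have ha : 0 ≤ a := abs_nonneg μ
  have hn : (0 : ℝ) ≤ n := n.cast_nonneg
  have han : a * n ≤ 1 / 8 := by nlinarith
  have hμ2 : μ ^ 2 = a ^ 2 := (sq_abs μ).symm
  have hμ' : |μ + 2 * μ ^ 2| ≤ a * (1 + 2 * a) :=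
    calc |μ + 2 * μ ^ 2| ≤ |μ| + |2 * μ ^ 2| := abs_add_le _ _
      _ = a * (1 + 2 * a) := by rw [abs_mul, abs_two, abs_pow, ← ha_def]; ring
  have hμ'sq : (μ + 2 * μ ^ 2) ^ 2 ≤ a ^ 2 * (1 + 2 * a) ^ 2 := by
    rw [← sq_abs, ← mul_pow]; exact pow_le_pow_left₀ (abs_nonneg _) hμ' 2
  constructor
  · calc |μ + 2 * μ ^ 2| * n ≤ a * (1 + 2 * a) * n := by gcongr
      _ ≤ 1 / 8 := by nlinarith [mul_le_mul_of_nonneg_left han ha]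
  · have key : 2 * n + 4 * (1 + 2 * a) ^ 2 * n ^ 2 ≤ 4 * ((n : ℝ) + 1) ^ 2 := by
      nlinarith [mul_le_mul_of_nonneg_right han hn,
        mul_le_mul han han (by positivity) (by norm_num)]
    calc 2 * μ ^ 2 * n + 4 * (μ + 2 * μ ^ 2) ^ 2 * n ^ 2
        ≤ 2 * a ^ 2 * n + 4 * (a ^ 2 * (1 + 2 * a) ^ 2) * n ^ 2 := by
          have h2 : 2 * μ ^ 2 * n = 2 * a ^ 2 * n := by rw [hμ2]
          nlinarith [mul_le_mul_of_nonneg_right hμ'sq (sq_nonneg (n : ℝ))]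
      _ = a ^ 2 * (2 * n + 4 * (1 + 2 * a) ^ 2 * n ^ 2) := by ring
      _ ≤ a ^ 2 * (4 * ((n : ℝ) + 1) ^ 2) := by gcongr
      _ = 4 * μ ^ 2 * ((n : ℝ) + 1) ^ 2 := by rw [hμ2]; ring

theorem sum_exp_mul_norm_sq_signedSum_sub_le :
    ∀ (n : ℕ) (z : Fin n → ℂ), (∀ j, ‖z j‖ = 1) → ∀ μ : ℝ, |μ| * n ≤ 1 / 8 →
      ∑ σ : Fin n → Bool, exp (μ * (‖signedSum z σ‖ ^ 2 - n)) ≤ 2 ^ n * exp (4 * μ ^ 2 * n ^ 2)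
  | 0, z, _, μ, _ => by simp [signedSum]
  | n + 1, z, hz, μ, hμ => by
    push_cast at hμ ⊢
    obtain ⟨hμ', hexp⟩ := chaos_param_step hμ
    have ih := sum_exp_mul_norm_sq_signedSum_sub_le n (Fin.tail z) (fun j => hz j.succ) _ hμ'
    calc ∑ σ : Fin (n + 1) → Bool, exp (μ * (‖signedSum z σ‖ ^ 2 - (n + 1)))
        ≤ ∑ τ : Fin n → Bool, 2 * exp (2 * μ ^ 2 * n) *
            exp ((μ + 2 * μ ^ 2) * (‖signedSum (Fin.tail z) τ‖ ^ 2 - n)) := by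
          rw [sum_fin_succ_pi]
          gcongr with τ
          simp only [signedSum_cons]
          refine (sum_bool_exp_le (hz 0) _ μ n).trans_eq ?_
          rw [exp_add]; ring
      _ ≤ 2 * exp (2 * μ ^ 2 * n) * (2 ^ n * exp (4 * (μ + 2 * μ ^ 2) ^ 2 * n ^ 2)) := by
          rw [← mul_sum]; gcongr
      _ ≤ 2 ^ (n + 1) * exp (4 * μ ^ 2 * (n + 1) ^ 2) := by
          rw [pow_succ (2 : ℝ) n, mul_mul_mul_comm, ← exp_add, mul_comm (2 : ℝ)]
          gcongr

section Counting

variable {α : Type*} [Fintype α]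

lemma card_filter_mul_exp_le_sum_exp (h : α → ℝ) (t : ℝ) :
    (#{a | t ≤ h a} : ℝ) * exp t ≤ ∑ a, exp (h a) :=
  calc (#{a | t ≤ h a} : ℝ) * exp t = ∑ a with t ≤ h a, exp t := by
        rw [sum_const, nsmul_eq_mul]
    _ ≤ ∑ a with t ≤ h a, exp (h a) := sum_le_sum fun a ha => exp_le_exp.2 (mem_filter.1 ha).2
    _ ≤ ∑ a, exp (h a) := sum_le_sum_of_subset_of_nonneg (filter_subset _ _)
        fun _ _ _ => (exp_pos _).le

lemma card_le_abs_le_of_sum_exp_le {Z : α → ℝ} {lam K : ℝ} (hlam : 0 ≤ lam)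
    (hmgf : ∀ s, |s| = lam → ∑ a, exp (s * Z a) ≤ K) (t : ℝ) :
    (#{a | t ≤ |Z a|} : ℝ) ≤ 2 * K * exp (-(lam * t)) := by
  classical
  have tail (s : ℝ) (hs : |s| = lam) :
      (#{a | lam * t ≤ s * Z a} : ℝ) ≤ K * exp (-(lam * t)) := by
    rw [exp_neg, ← div_eq_mul_inv, le_div_iff₀ (exp_pos _)]
    exact (card_filter_mul_exp_le_sum_exp _ _).trans (hmgf s hs)
  have hsub : ({a | t ≤ |Z a|} : Finset α) ⊆
      ({a | lam * t ≤ lam * Z a} : Finset α) ∪ ({a | lam * t ≤ -lam * Z a} : Finset α) := by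
    intro a ha
    simp only [mem_filter, mem_univ, true_and] at ha
    rw [mem_union, mem_filter, mem_filter]
    rcases le_abs'.1 ha with h | h
    · exact Or.inr ⟨mem_univ a, by linarith [mul_le_mul_of_nonneg_left h hlam]⟩
    · exact Or.inl ⟨mem_univ a, mul_le_mul_of_nonneg_left h hlam⟩
  calc (#{a | t ≤ |Z a|} : ℝ)
      ≤ #{a | lam * t ≤ lam * Z a} + #{a | lam * t ≤ -lam * Z a} := by
        exact_mod_cast (card_le_card hsub).trans (card_union_le _ _)
    _ ≤ K * exp (-(lam * t)) + K * exp (-(lam * t)) :=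
        add_le_add (tail lam (abs_of_nonneg hlam))
          (tail (-lam) (by rw [abs_neg, abs_of_nonneg hlam]))
    _ = 2 * K * exp (-(lam * t)) := by ring

end Counting

lemma sum_prod_comp_equiv {ι κ ν β M : Type*} [Fintype ι] [DecidableEq ι] [Fintype κ]
    [DecidableEq κ] [Fintype ν] [DecidableEq ν] [Fintype β] [CommSemiring M]
    (e : ι × κ ≃ ν) (f : ι → (κ → β) → M) :
    ∑ σ : ν → β, ∏ i, f i (fun k => σ (e (i, k))) = ∏ i, ∑ τ : κ → β, f i τ := by
  rw [Fintype.prod_sum]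
  exact Fintype.sum_equiv ((Equiv.arrowCongr e.symm (Equiv.refl β)).trans (Equiv.curry _ _ _))
    _ _ fun σ => rfl

def dftPhase (W : ℕ) (k w : Fin W) : ℂ :=
  Complex.exp (-2 * Real.pi * Complex.I * (k.val : ℂ) * (w.val : ℂ) / (W : ℂ))

lemma dftMatrix_eq (W : ℕ) (k w : Fin W) :
    dftMatrix W k w = (Real.sqrt W : ℂ)⁻¹ * dftPhase W k w := rfl

lemma norm_dftPhase (W : ℕ) (k w : Fin W) : ‖dftPhase W k w‖ = 1 := by
  have h : -2 * Real.pi * Complex.I * (k.val : ℂ) * (w.val : ℂ) / (W : ℂ) =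
      ((-2 * Real.pi * k.val * w.val / W : ℝ) : ℂ) * Complex.I := by
    push_cast; ring
  rw [dftPhase, h, Complex.norm_exp_ofReal_mul_I]

section Blocks

variable {R q : ℕ}

lemma sampMatrix_finProdFinEquiv (r r' : Fin R) (i : Fin q) :
    sampMatrix (R * q) R r (finProdFinEquiv (r', i)) = if r' = r then 1 else 0 := by
  have hq : 0 < q := i.pos
  have hdiv : ((i : ℕ) + q * r') / q = r' := by
    rw [Nat.add_mul_div_left _ _ hq, Nat.div_eq_of_lt i.isLt, zero_add]
  have hblock : (r : ℕ) * q ≤ i + q * r' ∧ i + q * r' < (r + 1) * q ↔ r' = r := by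
    rw [← Nat.le_div_iff_mul_le hq, ← Nat.div_lt_iff_lt_mul hq, hdiv, Fin.ext_iff]
    omega
  simp only [sampMatrix, Nat.mul_div_cancel_left q r.pos, finProdFinEquiv_apply_val, hblock]

lemma demodMatrix_apply (v : Fin (R * q) → ℝ) (r : Fin R) (w : Fin (R * q)) :
    demodMatrix (R * q) R v r w =
      ∑ i : Fin q, (v (finProdFinEquiv (r, i)) : ℂ) *
        dftMatrix (R * q) (finProdFinEquiv (r, i)) w := by
  rw [demodMatrix, mul_apply, ← finProdFinEquiv.sum_comp, Fintype.sum_prod_type]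
  simp [sampMatrix_finProdFinEquiv, mul_diagonal]

def blockPhases (R q : ℕ) (w : Fin (R * q)) (r : Fin R) (i : Fin q) : ℂ :=
  dftPhase (R * q) (finProdFinEquiv (r, i)) w

/-- `W (‖φ_w‖₂² - 1)` for the signs `σ`, by `sum_norm_sq_demodMatrix_sub_one`. -/
def columnChaos (R q : ℕ) (w : Fin (R * q)) (σ : Fin (R * q) → Bool) : ℝ :=
  ∑ r : Fin R, (‖signedSum (blockPhases R q w r) (fun i => σ (finProdFinEquiv (r, i)))‖ ^ 2 - q)

lemma sum_norm_sq_demodMatrix_sub_one (hW : R * q ≠ 0) (σ : Fin (R * q) → Bool)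
    (w : Fin (R * q)) :
    ∑ r, ‖demodMatrix (R * q) R (fun j => boolSign (σ j)) r w‖ ^ 2 - 1 =
      columnChaos R q w σ / (R * q : ℕ) := by
  have hentry (r : Fin R) : ‖demodMatrix (R * q) R (fun j => boolSign (σ j)) r w‖ ^ 2 =
      ‖signedSum (blockPhases R q w r) (fun i => σ (finProdFinEquiv (r, i)))‖ ^ 2 /
        (R * q : ℕ) := by
    have hsum : ∑ i : Fin q, (boolSign (σ (finProdFinEquiv (r, i))) : ℂ) *
          dftMatrix (R * q) (finProdFinEquiv (r, i)) w =
        (Real.sqrt (R * q : ℕ) : ℂ)⁻¹ *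
          signedSum (blockPhases R q w r) (fun i => σ (finProdFinEquiv (r, i))) := by
      simp only [signedSum, blockPhases, mul_sum, dftMatrix_eq]
      exact sum_congr rfl fun i _ => by ring
    rw [demodMatrix_apply, hsum, norm_mul, norm_inv, Complex.norm_real, Real.norm_eq_abs,
      abs_of_nonneg (Real.sqrt_nonneg _), mul_pow, inv_pow, Real.sq_sqrt (Nat.cast_nonneg _)]
    ring
  have hW' : ((R * q : ℕ) : ℝ) ≠ 0 := Nat.cast_ne_zero.2 hW
  simp only [hentry, columnChaos, ← sum_div, sum_sub_distrib, sum_const, card_univ,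
    Fintype.card_fin, nsmul_eq_mul]
  field_simp
  push_cast
  ring

lemma sum_exp_mul_columnChaos_le (w : Fin (R * q)) {lam : ℝ} (hlam : |lam| * q ≤ 1 / 8) :
    ∑ σ, exp (lam * columnChaos R q w σ) ≤ 2 ^ (R * q) * exp (4 * lam ^ 2 * q ^ 2 * R) :=
  calc ∑ σ, exp (lam * columnChaos R q w σ)
      = ∏ r : Fin R, ∑ τ : Fin q → Bool,
          exp (lam * (‖signedSum (blockPhases R q w r) τ‖ ^ 2 - q)) := by
        simp only [columnChaos, mul_sum, exp_sum]
        exact sum_prod_comp_equiv finProdFinEquiv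
          fun r τ => exp (lam * (‖signedSum (blockPhases R q w r) τ‖ ^ 2 - q))
    _ ≤ ∏ _r : Fin R, 2 ^ q * exp (4 * lam ^ 2 * q ^ 2) := by
        gcongr with r
        exact sum_exp_mul_norm_sq_signedSum_sub_le q _ (fun i => norm_dftPhase _ _ _) lam hlam
    _ = 2 ^ (R * q) * exp (4 * lam ^ 2 * q ^ 2 * R) := by
        rw [prod_const, card_univ, Fintype.card_fin, mul_pow, ← pow_mul, mul_comm q R,
          ← exp_nat_mul]
        ring_nf

lemma card_column_deviation_le (hW : R * q ≠ 0) (w : Fin (R * q)) {δ : ℝ} (hδ0 : 0 ≤ δ)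
    (hδ1 : δ ≤ 1) :
    (#{σ : Fin (R * q) → Bool |
        δ ≤ |∑ r, ‖demodMatrix (R * q) R (fun j => boolSign (σ j)) r w‖ ^ 2 - 1|} : ℝ) ≤
      2 * 2 ^ (R * q) * exp (-(R * δ ^ 2 / 16)) := by
  have hq : (q : ℝ) ≠ 0 := Nat.cast_ne_zero.2 (right_ne_zero_of_mul hW)
  have hW' : (0 : ℝ) < (R * q : ℕ) := Nat.cast_pos.2 (Nat.pos_of_ne_zero hW)
  have hset (σ : Fin (R * q) → Bool) :
      δ ≤ |∑ r, ‖demodMatrix (R * q) R (fun j => boolSign (σ j)) r w‖ ^ 2 - 1| ↔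
        (R * q : ℕ) * δ ≤ |columnChaos R q w σ| := by
    rw [sum_norm_sq_demodMatrix_sub_one hW, abs_div, Nat.abs_cast, le_div_iff₀ hW', mul_comm]
  set lam := δ / (8 * q) with hlam
  have hlam0 : 0 ≤ lam := by positivity
  have hlamq : lam * q ≤ 1 / 8 := by
    rw [hlam, div_mul_eq_mul_div, div_le_iff₀ (by positivity)]
    nlinarith
  have hmgf (s : ℝ) (hs : |s| = lam) :
      ∑ σ, exp (s * columnChaos R q w σ) ≤ 2 ^ (R * q) * exp (4 * lam ^ 2 * q ^ 2 * R) := by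
    rw [← hs, sq_abs]; exact sum_exp_mul_columnChaos_le w (by rwa [hs])
  have hexp : 4 * lam ^ 2 * q ^ 2 * R + -(lam * ((R * q : ℕ) * δ)) = -(R * δ ^ 2 / 16) := by
    rw [hlam]; push_cast; field_simp; ring
  calc (#{σ : Fin (R * q) → Bool |
          δ ≤ |∑ r, ‖demodMatrix (R * q) R (fun j => boolSign (σ j)) r w‖ ^ 2 - 1|} : ℝ)
      = (#{σ | (R * q : ℕ) * δ ≤ |columnChaos R q w σ|} : ℝ) := by simp only [hset]
    _ ≤ 2 * (2 ^ (R * q) * exp (4 * lam ^ 2 * q ^ 2 * R)) * exp (-(lam * ((R * q : ℕ) * δ))) :=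
        card_le_abs_le_of_sum_exp_le hlam0 hmgf _
    _ = 2 * 2 ^ (R * q) * exp (-(R * δ ^ 2 / 16)) := by rw [← hexp, exp_add]; ring

lemma card_exists_column_deviation_mul_le (hW : 2 ≤ R * q) {δ : ℝ} (hδ0 : 0 ≤ δ) (hδ1 : δ ≤ 1)
    (hR : 48 * log (R * q : ℕ) ≤ δ ^ 2 * R) :
    (#{σ : Fin (R * q) → Bool | ∃ w,
        δ ≤ |∑ r, ‖demodMatrix (R * q) R (fun j => boolSign (σ j)) r w‖ ^ 2 - 1|} : ℝ) *
      (R * q : ℕ) ≤ 2 ^ (R * q) := by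
  set W : ℝ := ((R * q : ℕ) : ℝ) with hW_def
  have hW2 : (2 : ℝ) ≤ W := by rw [hW_def]; exact_mod_cast hW
  have hexp : exp (-(R * δ ^ 2 / 16)) ≤ (W ^ 3)⁻¹ := by
    rw [← exp_log (by positivity : (0 : ℝ) < W ^ 3), ← exp_neg, log_pow]
    gcongr
    push_cast
    linarith
  have hunion : ({σ | ∃ w,
        δ ≤ |∑ r, ‖demodMatrix (R * q) R (fun j => boolSign (σ j)) r w‖ ^ 2 - 1|} :
        Finset (Fin (R * q) → Bool)) =
      univ.biUnion fun w =>
        {σ | δ ≤ |∑ r, ‖demodMatrix (R * q) R (fun j => boolSign (σ j)) r w‖ ^ 2 - 1|} := by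
    ext σ; simp
  calc _ ≤ (∑ w : Fin (R * q), (2 * 2 ^ (R * q) * exp (-(R * δ ^ 2 / 16)) : ℝ)) * W := by
        refine mul_le_mul_of_nonneg_right ?_ (by positivity)
        rw [hunion]
        refine (Nat.cast_le.2 card_biUnion_le).trans ?_
        push_cast
        exact sum_le_sum fun w _ => card_column_deviation_le (by omega) w hδ0 hδ1
    _ ≤ W * (2 * 2 ^ (R * q) * (W ^ 3)⁻¹) * W := by
        rw [sum_const, card_univ, Fintype.card_fin, nsmul_eq_mul]
        gcongr
    _ = 2 / W * 2 ^ (R * q) := by field_simp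
    _ ≤ 2 ^ (R * q) := mul_le_of_le_one_left (by positivity) ((div_le_one (by positivity)).2 hW2)

end Blocks

end RandomDemodulator

namespace IsRademacherFamily

open Finset RandomDemodulator

variable {Ω : Type} [MeasurableSpace Ω] {μ : Measure Ω} [IsProbabilityMeasure μ] {W : ℕ}
  {ε : Ω → Fin W → ℝ}

lemma measure_eq_boolSign (hε : IsRademacherFamily μ ε) (j : Fin W) (b : Bool) :
    μ {x | ε x j = boolSign b} = 2⁻¹ := by
  obtain ⟨hmeas, hval, hhalf, -⟩ := hε
  cases b
  · have hcompl : {x | ε x j = -1} = {x | ε x j = 1}ᶜ := by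
      ext x; rcases hval x j with h | h <;> norm_num [h]
    have hmeas1 : MeasurableSet {x | ε x j = 1} := hmeas j (measurableSet_singleton 1)
    rw [boolSign_false, hcompl, prob_compl_eq_one_sub hmeas1, hhalf, one_div,
      ENNReal.one_sub_inv_two]
  · rw [boolSign_true, hhalf, one_div]

lemma measure_eq_signVector (hε : IsRademacherFamily μ ε) (σ : Fin W → Bool) :
    μ {x | ε x = fun j => boolSign (σ j)} = 2⁻¹ ^ W := by
  have ⟨_, _, _, hindep⟩ := hε
  have hinter : {x | ε x = fun j => boolSign (σ j)} =
      ⋂ j ∈ (univ : Finset (Fin W)), (fun x => ε x j) ⁻¹' {boolSign (σ j)} := by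
    ext x; simp [funext_iff]
  rw [hinter, hindep.measure_inter_preimage_eq_mul _ fun j _ => measurableSet_singleton _]
  simp only [Set.preimage, Set.mem_singleton_iff, hε.measure_eq_boolSign, prod_const, card_univ,
    Fintype.card_fin]

lemma measure_le_card_mul (hε : IsRademacherFamily μ ε) (P : (Fin W → ℝ) → Prop)
    [DecidablePred P] :
    μ {x | P (ε x)} ≤ #{σ : Fin W → Bool | P fun j => boolSign (σ j)} * 2⁻¹ ^ W := by
  have ⟨_, hval, _, _⟩ := hε
  have hcover : {x | P (ε x)} ⊆
      ⋃ σ ∈ ({σ | P fun j => boolSign (σ j)} : Finset (Fin W → Bool)),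
        {x | ε x = fun j => boolSign (σ j)} := by
    intro x hx
    have hsign : (fun j => boolSign (decide (ε x j = 1))) = ε x := by
      funext j; rcases hval x j with h | h <;> norm_num [h, boolSign]
    simp only [Set.mem_iUnion, mem_filter, mem_univ, true_and]
    refine ⟨fun j => decide (ε x j = 1), ?_, hsign.symm⟩
    show P fun j => boolSign (decide (ε x j = 1))
    rwa [hsign]
  calc μ {x | P (ε x)}
      ≤ ∑ σ ∈ ({σ | P fun j => boolSign (σ j)} : Finset (Fin W → Bool)),
          μ {x | ε x = fun j => boolSign (σ j)} :=
        (measure_mono hcover).trans (measure_biUnion_finset_le _ _)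
    _ = _ := by simp only [hε.measure_eq_signVector, sum_const, nsmul_eq_mul]

end IsRademacherFamily

open RandomDemodulator in
/-- (Column Norms) There is a universal constant `C > 0` such that, for every
`δ ∈ (0,1]`, if `W ≥ 2` and `R ≥ C·δ⁻²·log W` then
`P(max_ω |‖φ_ω‖₂² − 1| ≥ δ) ≤ 1/W`. -/
theorem column_norms :
    ∃ C : ℝ, 0 < C ∧ ∀ (W R : ℕ), 0 < R → R ∣ W → 2 ≤ W →
      ∀ δ : ℝ, 0 < δ → δ ≤ 1 →
      C / δ ^ 2 * Real.log W ≤ (R : ℝ) →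
      ∀ (Ωp : Type) [MeasurableSpace Ωp] (μ : Measure Ωp) [IsProbabilityMeasure μ]
        (ε : Ωp → Fin W → ℝ), IsRademacherFamily μ ε →
      μ {x | ∃ w : Fin W,
          δ ≤ |(∑ r, ‖demodMatrix W R (ε x) r w‖ ^ 2) - 1|}
        ≤ (W : ℝ≥0∞)⁻¹ := by
  refine ⟨48, by norm_num, ?_⟩
  rintro W R - ⟨q, rfl⟩ hW δ hδ0 hδ1 hlog Ωp _ μ _ ε hε
  have hR : 48 * Real.log (R * q : ℕ) ≤ δ ^ 2 * R := by
    rwa [div_mul_eq_mul_div, div_le_iff₀' (by positivity)] at hlog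
  have hcard := card_exists_column_deviation_mul_le hW hδ0.le hδ1 hR
  refine (hε.measure_le_card_mul fun v => ∃ w : Fin (R * q),
    δ ≤ |(∑ r, ‖demodMatrix (R * q) R v r w‖ ^ 2) - 1|).trans ?_
  rw [ENNReal.le_inv_iff_mul_le, mul_right_comm, ← ENNReal.inv_pow]
  calc _ ≤ (2 : ℝ≥0∞) ^ (R * q) * (2 ^ (R * q))⁻¹ := by
        gcongr; exact_mod_cast hcard
    _ = 1 := ENNReal.mul_inv_cancel (by simp) (by simp)
end
end
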